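/- Let C be a nodal curve with components C_1,…,C_p and marked smooth point σ(0). Fix (i,j,k) with i ≠ j and C_i ∩ C_j ≠ ∅. If the symmetric difference T^s_{i,k|j,k} is nonempty for some s ∈ {2,3}, then T¹_{i,k|j,k} := (T¹_i ∪ T¹_k) Δ (T¹_j ∪ T¹_k) restricted to the relevant 1-tail data, namely the symmetric difference of the degree-1 nested sets appearing in T_{i,k} and T_{j,k}, is empty. -/

import Mathlib

/-!
A 1-tail `Z₀` in the symmetric difference contains exactly one of `C_i`, `C_j`, so its unique
terminal point is a node joining them. A connected subcurve meeting both `Z₀` and `Z₀ᶜ` must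
contain that node; applied to a tail `T ⊇ C_k` avoiding `σ(0)` (or to `Tᶜ`), this shows that
`T` contains `C_i` iff it contains `C_j`. Hence the conditions defining `T^s_{i,k}` and
`T^s_{j,k}` coincide. Uncrossing (submodularity of `k`) makes every minimal element chosen in
the construction of a nested set unique (for 3-tails, a 2-tail produced by uncrossing would be
free from all of `T²`, against the maximality of `T²`), so the nested sets themselves coincide,
against the hypothesis.
-/

open Finset

/-- A combinatorial model of a nodal curve: `V` is the set of irreducible
components, `N` the set of nodes, `ends e` the (one or two) components through
the node `e`, `gen v` the geometric genus of the component `v`, and `base` the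
component containing the marked smooth point `σ(0)`. -/
structure NodalGraph where
  V : Type
  N : Type
  [fV : Fintype V]
  [dV : DecidableEq V]
  [fN : Fintype N]
  [dN : DecidableEq N]
  ends : N → V × V
  gen : V → ℕ
  base : V

attribute [instance] NodalGraph.fV NodalGraph.dV NodalGraph.fN NodalGraph.dN

namespace NodalGraph

variable (G : NodalGraph)

/-- Two components are adjacent if some node lies on both. -/
def Adj (a b : G.V) : Prop := ∃ e, G.ends e = (a, b) ∨ G.ends e = (b, a)

/-- The set of terminal points of a subcurve `Z`, i.e. the nodes in `Z ∩ Zᶜ`. -/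
def Term (Z : Finset G.V) : Finset G.N :=
  univ.filter (fun e =>
    ((G.ends e).1 ∈ Z ∧ (G.ends e).2 ∉ Z) ∨ ((G.ends e).1 ∉ Z ∧ (G.ends e).2 ∈ Z))

/-- `k_Z`, the number of terminal points of `Z`. -/
def k (Z : Finset G.V) : ℕ := (G.Term Z).card

/-- A (nonempty) subcurve is connected. -/
def ConnSub (Z : Finset G.V) : Prop :=
  Z.Nonempty ∧ ∀ u ∈ Z, ∀ v ∈ Z,
    Relation.ReflTransGen (fun a b => a ∈ Z ∧ b ∈ Z ∧ G.Adj a b) u v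

/-- The whole curve is connected. -/
def Connected : Prop := G.ConnSub univ

/-- A tail: a proper subcurve `Z` with both `Z` and `Zᶜ` connected. -/
def IsTail (Z : Finset G.V) : Prop := Z ≠ univ ∧ G.ConnSub Z ∧ G.ConnSub Zᶜ

/-- A `m`-tail: a tail with `k_Z = m`. -/
def IsKTail (Z : Finset G.V) (m : ℕ) : Prop := G.IsTail Z ∧ G.k Z = m

/-- The node `e` lies on the component `v`. -/
def onComp (e : G.N) (v : G.V) : Prop := (G.ends e).1 = v ∨ (G.ends e).2 = v

/-- The node `e`, as a point of the curve, lies on the subcurve `Z`. -/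
def nodeOn (e : G.N) (Z : Finset G.V) : Prop := (G.ends e).1 ∈ Z ∨ (G.ends e).2 ∈ Z

/-- The subcurve `Z` crosses the node `e`: both branches of `e` lie in `Z`. -/
def crosses (Z : Finset G.V) (e : G.N) : Prop := (G.ends e).1 ∈ Z ∧ (G.ends e).2 ∈ Z

/-- `Z ≺ Z'`: strict inclusion with disjoint terminal points. -/
def prec (Z Z' : Finset G.V) : Prop := Z ⊂ Z' ∧ G.Term Z ∩ G.Term Z' = ∅

/-- The pair `(Z, Z')` is free: disjoint terminal points. -/
def free (Z Z' : Finset G.V) : Prop := G.Term Z ∩ G.Term Z' = ∅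

/-- The pair `(Z, Z')` is perfect. -/
def perfect (Z Z' : Finset G.V) : Prop := Z ⊆ Z' ∨ Z' ⊆ Z ∨ Zᶜ ⊆ Z' ∨ Z' ⊆ Zᶜ

/-- `T¹_γ`: the nested set of 1-tails containing `C_γ` and avoiding `σ(0)`. -/
def T1 (γ : G.V) : Set (Finset G.V) := { Z | G.IsKTail Z 1 ∧ γ ∈ Z ∧ G.base ∉ Z }

/-- The defining condition for the 2-tails entering `T²_{γ,γ'}`. -/
def cond2 (γ γ' : G.V) (Z : Finset G.V) : Prop :=
  G.IsKTail Z 2 ∧ γ ∈ Z ∧ γ' ∈ Z ∧ G.base ∉ Z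

/-- `W 0 ≺ W 1 ≺ ⋯ ≺ W (M-1)` is the nested set `T²_{γ,γ'}` of 2-tails:
each `W t` is minimal among the 2-tails `Z ⊇ C_γ ∪ C_γ'` with `σ(0) ∈ Zᶜ`
and `W (t-1) ≺ Z` (starting from `W_{-1} = ∅`), and the chain is maximal. -/
def IsNested2 (γ γ' : G.V) (M : ℕ) (W : ℕ → Finset G.V) : Prop :=
  (∀ t < M, Minimal (fun Z => G.cond2 γ γ' Z ∧ G.prec (if t = 0 then ∅ else W (t - 1)) Z) (W t)) ∧
  ¬ ∃ Z, G.cond2 γ γ' Z ∧ G.prec (if M = 0 then ∅ else W (M - 1)) Z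

/-- The set underlying a finite chain `W 0, …, W (M-1)`. -/
def chainSet (M : ℕ) (W : ℕ → Finset G.V) : Set (Finset G.V) := { Z | ∃ t < M, W t = Z }

/-- The defining condition for the 3-tails entering `T³_{γ,γ'}`:
3-tails that are moreover free with respect to every member of `T²_{γ,γ'}`. -/
def cond3 (γ γ' : G.V) (T2 : Set (Finset G.V)) (Z : Finset G.V) : Prop :=
  G.IsKTail Z 3 ∧ γ ∈ Z ∧ γ' ∈ Z ∧ G.base ∉ Z ∧ ∀ W ∈ T2, G.free Z W

/-- `W 0 ≺ ⋯ ≺ W (M-1)` is the nested set `T³_{γ,γ'}` of 3-tails (relative to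
the set `T2` of nested 2-tails). -/
def IsNested3 (γ γ' : G.V) (T2 : Set (Finset G.V)) (M : ℕ) (W : ℕ → Finset G.V) : Prop :=
  (∀ t < M, Minimal (fun Z => G.cond3 γ γ' T2 Z ∧ G.prec (if t = 0 then ∅ else W (t - 1)) Z) (W t)) ∧
  ¬ ∃ Z, G.cond3 γ γ' T2 Z ∧ G.prec (if M = 0 then ∅ else W (M - 1)) Z

end NodalGraph

lemma setOf_minimal_subsingleton {α : Type*} [PartialOrder α] {P : α → Prop}
    (h : ∀ x y, Minimal P x → Minimal P y → x ≤ y ∨ y ≤ x) : {x | Minimal P x}.Subsingleton :=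
  fun x hx y hy => (h x y hx hy).elim (fun hxy => hy.eq_of_le hx.1 hxy)
    fun hyx => (hx.eq_of_le hy.1 hyx).symm

namespace NodalGraph

variable {G : NodalGraph}

instance (S : Finset G.V) : DecidablePred (G.crosses S) := fun e => by
  unfold crosses; infer_instance

@[simp]
lemma mem_Term {Z : Finset G.V} {e : G.N} :
    e ∈ G.Term Z ↔ ((G.ends e).1 ∈ Z ∧ (G.ends e).2 ∉ Z) ∨
      ((G.ends e).1 ∉ Z ∧ (G.ends e).2 ∈ Z) := by
  simp [Term]

@[simp]
lemma Term_empty : G.Term (∅ : Finset G.V) = ∅ := by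
  ext e; simp

@[simp]
lemma Term_compl (Z : Finset G.V) : G.Term Zᶜ = G.Term Z := by
  ext e; simp only [mem_Term, mem_compl]; tauto

lemma k_compl (Z : Finset G.V) : G.k Zᶜ = G.k Z := by
  rw [k, k, Term_compl]

lemma Term_inter_subset (Z Z' : Finset G.V) : G.Term (Z ∩ Z') ⊆ G.Term Z ∪ G.Term Z' := by
  intro e; simp only [mem_Term, mem_union, mem_inter]; tauto

lemma Term_union_subset (Z Z' : Finset G.V) : G.Term (Z ∪ Z') ⊆ G.Term Z ∪ G.Term Z' := by
  intro e; simp only [mem_Term, mem_union]; tauto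

lemma Term_inter_inter_Term_union_subset (Z Z' : Finset G.V) :
    G.Term (Z ∩ Z') ∩ G.Term (Z ∪ Z') ⊆ G.Term Z ∩ G.Term Z' := by
  intro e; simp only [mem_Term, mem_union, mem_inter]; tauto

lemma k_inter_add_k_union_le (Z Z' : Finset G.V) :
    G.k (Z ∩ Z') + G.k (Z ∪ Z') ≤ G.k Z + G.k Z' := by
  unfold k
  rw [← card_union_add_card_inter, ← card_union_add_card_inter (G.Term Z)]
  exact add_le_add (card_le_card (union_subset (Term_inter_subset Z Z') (Term_union_subset Z Z')))
    (card_le_card (Term_inter_inter_Term_union_subset Z Z'))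

lemma mem_Term_of_onComp {Z : Finset G.V} {e : G.N} {a b : G.V} (ha : G.onComp e a)
    (hb : G.onComp e b) (haZ : a ∈ Z) (hbZ : b ∉ Z) : e ∈ G.Term Z := by
  unfold onComp at ha hb
  rw [mem_Term]
  rcases ha with rfl | rfl <;> rcases hb with rfl | rfl <;> tauto

lemma free_iff_disjoint {Y Z : Finset G.V} : G.free Y Z ↔ Disjoint (G.Term Y) (G.Term Z) :=
  disjoint_iff_inter_eq_empty.symm

lemma free_right_of_Term_subset {W X Y Z : Finset G.V} (hY : G.free W Y) (hZ : G.free W Z)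
    (hX : G.Term X ⊆ G.Term Y ∪ G.Term Z) : G.free W X := by
  rw [free_iff_disjoint] at *
  exact (disjoint_union_right.2 ⟨hY, hZ⟩).mono_right hX

lemma free_left_of_Term_subset {W X Y Z : Finset G.V} (hY : G.free Y W) (hZ : G.free Z W)
    (hX : G.Term X ⊆ G.Term Y ∪ G.Term Z) : G.free X W := by
  rw [free_iff_disjoint] at *
  exact (disjoint_union_left.2 ⟨hY, hZ⟩).mono_left hX

lemma free_comm {Y Z : Finset G.V} (h : G.free Y Z) : G.free Z Y := by
  rw [free, inter_comm]; exact h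

lemma free_empty_left (Z : Finset G.V) : G.free ∅ Z := by
  simp [free]

lemma prec_of_subset_of_free {Y Z : Finset G.V} (hYZ : Y ⊆ Z) (hfree : G.free Y Z)
    (hk : G.k Z ≠ 0) : G.prec Y Z := by
  refine ⟨ssubset_of_subset_of_ne hYZ ?_, hfree⟩
  rintro rfl
  unfold free at hfree
  rw [inter_self] at hfree
  exact hk (by rw [k, hfree, card_empty])

lemma prec_inter {Y Z Z' : Finset G.V} (hY : G.prec Y Z) (hYZ' : Y ⊆ Z') (hfree : G.free Y Z')
    (hk : G.k (Z ∩ Z') ≠ 0) : G.prec Y (Z ∩ Z') :=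
  prec_of_subset_of_free (subset_inter hY.1.subset hYZ')
    (free_right_of_Term_subset hY.2 hfree (Term_inter_subset Z Z')) hk

lemma exists_mem_Term_crosses_of_reflTransGen {S W : Finset G.V} {u v : G.V}
    (h : Relation.ReflTransGen (fun a b => a ∈ S ∧ b ∈ S ∧ G.Adj a b) u v)
    (hu : u ∈ W) (hv : v ∉ W) : ∃ e ∈ G.Term W, G.crosses S e := by
  induction h with
  | refl => exact absurd hu hv
  | @tail b c _ hbc ih =>
    by_cases hb : b ∈ W
    · obtain ⟨hbS, hcS, e, he | he⟩ := hbc <;>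
        exact ⟨e, by simp [he, hb, hv], by simp [crosses, he, hbS, hcS]⟩
    · exact ih hb

lemma ConnSub.exists_mem_Term_crosses {S W : Finset G.V} (hS : G.ConnSub S) {u v : G.V}
    (hu : u ∈ S) (hv : v ∈ S) (huW : u ∈ W) (hvW : v ∉ W) : ∃ e ∈ G.Term W, G.crosses S e :=
  exists_mem_Term_crosses_of_reflTransGen (hS.2 u hu v hv) huW hvW

lemma ConnSub.union {S T : Finset G.V} {p : G.V} (hS : G.ConnSub S) (hT : G.ConnSub T)
    (hpS : p ∈ S) (hpT : p ∈ T) : G.ConnSub (S ∪ T) := by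
  have lift : ∀ U ⊆ S ∪ T, ∀ {a b : G.V},
      Relation.ReflTransGen (fun a b => a ∈ U ∧ b ∈ U ∧ G.Adj a b) a b →
      Relation.ReflTransGen (fun a b => a ∈ S ∪ T ∧ b ∈ S ∪ T ∧ G.Adj a b) a b :=
    fun U hU _ _ => Relation.ReflTransGen.mono (fun _ _ h => ⟨hU h.1, hU h.2.1, h.2.2⟩) _ _
  have to_p : ∀ w ∈ S ∪ T,
      Relation.ReflTransGen (fun a b => a ∈ S ∪ T ∧ b ∈ S ∪ T ∧ G.Adj a b) w p ∧
      Relation.ReflTransGen (fun a b => a ∈ S ∪ T ∧ b ∈ S ∪ T ∧ G.Adj a b) p w := by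
    intro w hw
    rcases mem_union.mp hw with h | h
    · exact ⟨lift S subset_union_left (hS.2 w h p hpS), lift S subset_union_left (hS.2 p hpS w h)⟩
    · exact ⟨lift T subset_union_right (hT.2 w h p hpT), lift T subset_union_right (hT.2 p hpT w h)⟩
  exact ⟨⟨p, mem_union_left _ hpS⟩, fun u hu v hv => (to_p u hu).1.trans (to_p v hv).2⟩

lemma ConnSub.of_exits_eq {S P : Finset G.V} {x : G.V} (hS : G.ConnSub S) (hPS : P ⊆ S)
    (hx : x ∈ P) (hexit : ∀ a ∈ P, ∀ b ∈ S, b ∉ P → G.Adj a b → a = x) : G.ConnSub P := by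
  classical
  let r : G.V → G.V := fun v => if v ∈ P then v else x
  have hpush : ∀ u v, Relation.ReflTransGen (fun a b => a ∈ S ∧ b ∈ S ∧ G.Adj a b) u v →
      Relation.ReflTransGen (fun a b => a ∈ P ∧ b ∈ P ∧ G.Adj a b) (r u) (r v) := by
    intro u v h
    induction h with
    | refl => exact .refl
    | @tail b c _ hbc ih =>
      refine ih.trans ?_
      obtain ⟨hbS, hcS, hadj⟩ := hbc
      by_cases hbP : b ∈ P <;> by_cases hcP : c ∈ P <;> simp only [r, hbP, hcP, if_true, if_false]
      · exact .single ⟨hbP, hcP, hadj⟩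
      · rw [hexit b hbP c hcS hcP hadj]
      · rw [hexit c hcP b hbS hbP (by obtain ⟨e, he⟩ := hadj; exact ⟨e, he.symm⟩)]
      · exact .refl
  refine ⟨⟨x, hx⟩, fun u hu v hv => ?_⟩
  simpa [r, hu, hv] using hpush u v (hS.2 u (hPS hu) v (hPS hv))

lemma ConnSub.of_card_crossing_le_one {S P : Finset G.V} (hS : G.ConnSub S) (hPS : P ⊆ S)
    (hP : P.Nonempty) (hcard : ((G.Term P).filter (G.crosses S)).card ≤ 1) : G.ConnSub P := by
  have hmem : ∀ {a b : G.V} {e : G.N}, a ∈ P → b ∈ S → b ∉ P →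
      (G.ends e = (a, b) ∨ G.ends e = (b, a)) → e ∈ (G.Term P).filter (G.crosses S) := by
    rintro a b e ha hbS hb (he | he) <;> simp [he, crosses, ha, hb, hbS, hPS ha]
  by_cases hex : ∃ a ∈ P, ∃ b ∈ S, b ∉ P ∧ G.Adj a b
  · obtain ⟨a₀, ha₀, b₀, hb₀S, hb₀, e₀, he₀⟩ := hex
    refine hS.of_exits_eq hPS ha₀ fun a ha b hbS hb ⟨e, he⟩ => ?_
    have hee₀ := card_le_one.mp hcard e (hmem ha hbS hb he) e₀ (hmem ha₀ hb₀S hb₀ he₀)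
    subst hee₀
    rcases he with he | he <;> rcases he₀ with he₀ | he₀ <;> rw [he] at he₀ <;>
      simp only [Prod.mk.injEq] at he₀ <;> grind
  · obtain ⟨x, hx⟩ := hP
    exact hS.of_exits_eq hPS hx fun a ha b hbS hb hadj => absurd ⟨a, ha, b, hbS, hb, hadj⟩ hex

lemma IsTail.compl {Z : Finset G.V} (hZ : G.IsTail Z) : G.IsTail Zᶜ := by
  refine ⟨fun h => ?_, hZ.2.2, by rw [compl_compl]; exact hZ.2.1⟩
  obtain ⟨x, hx⟩ := hZ.2.1.1
  exact (mem_compl.mp (h ▸ mem_univ x)) hx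

section Uncrossing

variable {Z Z' : Finset G.V} {γ δ : G.V}

lemma card_crossing_add_card_crossing_le_k (Z Z' : Finset G.V) :
    ((G.Term (Z ∩ Z')).filter (G.crosses Z)).card +
      ((G.Term (Z ∩ Z')).filter (G.crosses Z')).card ≤ G.k (Z ∩ Z') := by
  have hsub : (G.Term (Z ∩ Z')).filter (G.crosses Z) ⊆
      (G.Term (Z ∩ Z')).filter (fun e => ¬ G.crosses Z' e) := by
    intro e he
    rw [mem_filter] at he ⊢
    obtain ⟨hT, hc⟩ := he
    refine ⟨hT, fun hc' => ?_⟩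
    simp only [mem_Term, mem_inter] at hT
    unfold crosses at hc hc'
    tauto
  have := card_filter_add_card_filter_not (s := G.Term (Z ∩ Z')) (G.crosses Z')
  have := card_le_card hsub
  rw [k]
  omega

lemma crossing_inter_nonempty (hZ : G.ConnSub Z) (hγ : γ ∈ Z ∩ Z') (h : ¬ Z ⊆ Z') :
    ((G.Term (Z ∩ Z')).filter (G.crosses Z)).Nonempty := by
  obtain ⟨w, hwZ, hwZ'⟩ := not_subset.mp h
  obtain ⟨e, he, hcross⟩ :=
    hZ.exists_mem_Term_crosses (mem_inter.mp hγ).1 hwZ hγ fun hw => hwZ' (mem_inter.mp hw).2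
  exact ⟨e, mem_filter.mpr ⟨he, hcross⟩⟩

lemma one_le_card_crossings (hZ : G.ConnSub Z) (hZ' : G.ConnSub Z') (hγ : γ ∈ Z ∩ Z')
    (h : ¬ Z ⊆ Z') (h' : ¬ Z' ⊆ Z) :
    1 ≤ ((G.Term (Z ∩ Z')).filter (G.crosses Z)).card ∧
      1 ≤ ((G.Term (Z ∩ Z')).filter (G.crosses Z')).card := by
  have h₂ := crossing_inter_nonempty hZ' (by rwa [inter_comm]) h'
  rw [inter_comm Z'] at h₂
  exact ⟨card_pos.mpr (crossing_inter_nonempty hZ hγ h), card_pos.mpr h₂⟩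

lemma two_le_k_inter (hZ : G.ConnSub Z) (hZ' : G.ConnSub Z') (hγ : γ ∈ Z ∩ Z')
    (h : ¬ Z ⊆ Z') (h' : ¬ Z' ⊆ Z) : 2 ≤ G.k (Z ∩ Z') := by
  have := one_le_card_crossings hZ hZ' hγ h h'
  have := card_crossing_add_card_crossing_le_k (G := G) Z Z'
  omega

lemma connSub_inter_of_k_le_three (hZ : G.ConnSub Z) (hZ' : G.ConnSub Z') (hγ : γ ∈ Z ∩ Z')
    (h : ¬ Z ⊆ Z') (h' : ¬ Z' ⊆ Z) (hk : G.k (Z ∩ Z') ≤ 3) : G.ConnSub (Z ∩ Z') := by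
  have := one_le_card_crossings hZ hZ' hγ h h'
  have := card_crossing_add_card_crossing_le_k (G := G) Z Z'
  by_cases h₁ : ((G.Term (Z ∩ Z')).filter (G.crosses Z)).card ≤ 1
  · exact hZ.of_card_crossing_le_one inter_subset_left ⟨γ, hγ⟩ h₁
  · exact hZ'.of_card_crossing_le_one inter_subset_right ⟨γ, hγ⟩ (by omega)

lemma IsTail.inter (hZ : G.IsTail Z) (hZ' : G.IsTail Z') (hγ : γ ∈ Z ∩ Z') (hδ : δ ∉ Z ∪ Z')
    (h : ¬ Z ⊆ Z') (h' : ¬ Z' ⊆ Z) (hk : G.k (Z ∩ Z') ≤ 3) : G.IsTail (Z ∩ Z') := by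
  have hδZ : δ ∈ Zᶜ := mem_compl.mpr fun hδZ => hδ (mem_union_left _ hδZ)
  have hδZ' : δ ∈ Z'ᶜ := mem_compl.mpr fun hδZ' => hδ (mem_union_right _ hδZ')
  refine ⟨fun hA => mem_compl.mp hδZ (inter_subset_left (hA ▸ mem_univ δ)),
    connSub_inter_of_k_le_three hZ.2.1 hZ'.2.1 hγ h h' hk, ?_⟩
  rw [compl_inter]
  exact hZ.2.2.union hZ'.2.2 hδZ hδZ'

lemma two_le_k_union (hZ : G.IsTail Z) (hZ' : G.IsTail Z') (hδ : δ ∉ Z ∪ Z')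
    (h : ¬ Z ⊆ Z') (h' : ¬ Z' ⊆ Z) : 2 ≤ G.k (Z ∪ Z') := by
  rw [← k_compl, compl_union]
  exact two_le_k_inter hZ.compl.2.1 hZ'.compl.2.1 (by simpa using hδ)
    (by rwa [compl_subset_compl]) (by rwa [compl_subset_compl])

lemma IsTail.union (hZ : G.IsTail Z) (hZ' : G.IsTail Z') (hγ : γ ∈ Z ∩ Z') (hδ : δ ∉ Z ∪ Z')
    (h : ¬ Z ⊆ Z') (h' : ¬ Z' ⊆ Z) (hk : G.k (Z ∪ Z') ≤ 3) : G.IsTail (Z ∪ Z') := by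
  rw [← k_compl, compl_union] at hk
  have := (hZ.compl.inter hZ'.compl (by simpa using hδ) (by simpa using hγ)
    (by rwa [compl_subset_compl]) (by rwa [compl_subset_compl]) hk).compl
  rwa [← compl_union, compl_compl] at this

/-- By submodularity `k (Z ∩ Z') + k (Z ∪ Z') ≤ 2 s`, while both terms are at least `2`. -/
lemma uncross {s : ℕ} (hs : s ≤ 3) (hZ : G.IsKTail Z s) (hZ' : G.IsKTail Z' s)
    (hγ : γ ∈ Z ∩ Z') (hδ : δ ∉ Z ∪ Z') (h : ¬ Z ⊆ Z') (h' : ¬ Z' ⊆ Z) :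
    G.IsKTail (Z ∩ Z') s ∨ s = 3 ∧ (G.IsKTail (Z ∩ Z') 2 ∨ G.IsKTail (Z ∪ Z') 2) := by
  have hsub := k_inter_add_k_union_le (G := G) Z Z'
  have hA := two_le_k_inter hZ.1.2.1 hZ'.1.2.1 hγ h h'
  have hU := two_le_k_union hZ.1 hZ'.1 hδ h h'
  rw [hZ.2, hZ'.2] at hsub
  by_cases hkA : G.k (Z ∩ Z') ≤ 3
  · have htail := hZ.1.inter hZ'.1 hγ hδ h h' hkA
    by_cases hks : G.k (Z ∩ Z') = s
    · exact .inl ⟨htail, hks⟩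
    · exact .inr ⟨by omega, .inl ⟨htail, by omega⟩⟩
  · exact .inr ⟨by omega, .inr ⟨hZ.1.union hZ'.1 hγ hδ h h' (by omega), by omega⟩⟩

end Uncrossing

section Chains

variable {C : Finset G.V → Prop} {M M' : ℕ} {W W' : ℕ → Finset G.V}

def chainPred (W : ℕ → Finset G.V) (t : ℕ) : Finset G.V := if t = 0 then ∅ else W (t - 1)

def IsMinimalChain (C : Finset G.V → Prop) (M : ℕ) (W : ℕ → Finset G.V) : Prop :=
  (∀ t < M, Minimal (fun Z => C Z ∧ G.prec (chainPred W t) Z) (W t)) ∧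
  ¬ ∃ Z, C Z ∧ G.prec (chainPred W M) Z

lemma isNested2_iff {γ γ' : G.V} :
    G.IsNested2 γ γ' M W ↔ IsMinimalChain (G.cond2 γ γ') M W := Iff.rfl

lemma isNested3_iff {γ γ' : G.V} {T2 : Set (Finset G.V)} :
    G.IsNested3 γ γ' T2 M W ↔ IsMinimalChain (G.cond3 γ γ' T2) M W := Iff.rfl

lemma IsMinimalChain.chainPred_eq (h : IsMinimalChain C M W) (h' : IsMinimalChain C M' W')
    (huniq : ∀ Y, {Z | Minimal (fun T => C T ∧ G.prec Y T) Z}.Subsingleton) :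
    ∀ t ≤ M, t ≤ M' → chainPred W t = chainPred W' t := by
  intro t
  induction t with
  | zero => simp [chainPred]
  | succ t ih =>
    intro ht ht'
    simp only [chainPred, Nat.succ_ne_zero, if_false, Nat.add_sub_cancel]
    exact huniq _ (h.1 t ht) (by rw [ih (by omega) (by omega)]; exact h'.1 t ht')

lemma IsMinimalChain.length_le (h : IsMinimalChain C M W) (h' : IsMinimalChain C M' W')
    (huniq : ∀ Y, {Z | Minimal (fun T => C T ∧ G.prec Y T) Z}.Subsingleton) :
    M ≤ M' := by
  by_contra! hlt
  obtain ⟨hC, hprec⟩ := (h.1 M' hlt).1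
  exact h'.2 ⟨W M', hC, by rwa [← h.chainPred_eq h' huniq M' hlt.le le_rfl]⟩

lemma IsMinimalChain.chainSet_eq (h : IsMinimalChain C M W) (h' : IsMinimalChain C M' W')
    (huniq : ∀ Y, {Z | Minimal (fun T => C T ∧ G.prec Y T) Z}.Subsingleton) :
    G.chainSet M W = G.chainSet M' W' := by
  obtain rfl := le_antisymm (h.length_le h' huniq) (h'.length_le h huniq)
  have hW : ∀ t < M, W t = W' t := fun t ht => by
    simpa [chainPred] using h.chainPred_eq h' huniq (t + 1) ht ht
  ext Z
  exact ⟨fun ⟨t, ht, hZ⟩ => ⟨t, ht, (hW t ht).symm.trans hZ⟩,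
    fun ⟨t, ht, hZ⟩ => ⟨t, ht, (hW t ht).trans hZ⟩⟩

end Chains

section NestedSets

variable {γ γ' : G.V} {M : ℕ} {W : ℕ → Finset G.V} {Y Z T : Finset G.V}

lemma subset_or_subset_of_minimal_cond2
    (hZ : Minimal (fun X => G.cond2 γ γ' X ∧ G.prec Y X) Z) (hT : G.cond2 γ γ' T)
    (hYT : Y ⊆ T) (hfree : G.free Y T) : Z ⊆ T ∨ T ⊆ Z := by
  by_contra! h
  obtain ⟨⟨hZt, hγZ, hγ'Z, hbZ⟩, hYZ⟩ := hZ.1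
  obtain ⟨hTt, hγT, hγ'T, hbT⟩ := hT
  have hA : G.IsKTail (Z ∩ T) 2 := by
    rcases uncross (by norm_num) hZt hTt (mem_inter.mpr ⟨hγZ, hγT⟩)
      (show G.base ∉ Z ∪ T by simp [hbZ, hbT]) h.1 h.2 with hA | ⟨h23, -⟩
    · exact hA
    · omega
  have hZA : Z ⊆ Z ∩ T := hZ.le_of_le
    ⟨⟨hA, mem_inter.mpr ⟨hγZ, hγT⟩, mem_inter.mpr ⟨hγ'Z, hγ'T⟩, fun hb => hbZ (mem_inter.mp hb).1⟩,
      prec_inter hYZ hYT hfree (by rw [hA.2]; norm_num)⟩ inter_subset_left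
  exact h.1 (hZA.trans inter_subset_right)

lemma minimal_cond2_subsingleton (γ γ' : G.V) (Y : Finset G.V) :
    {Z | Minimal (fun X => G.cond2 γ γ' X ∧ G.prec Y X) Z}.Subsingleton :=
  setOf_minimal_subsingleton fun _ _ hZ hZ' =>
    subset_or_subset_of_minimal_cond2 hZ hZ'.1.1 hZ'.1.2.1.subset hZ'.1.2.2

lemma not_forall_free_of_isNested2 (hch : G.IsNested2 γ γ' M W) (hT : G.cond2 γ γ' T) :
    ¬ ∀ t < M, G.free T (W t) := by
  intro hfree
  have hk : G.k T ≠ 0 := by rw [hT.1.2]; norm_num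
  have hprec : ∀ t ≤ M, (∀ u < t, W u ⊆ T) → G.prec (chainPred W t) T := by
    intro t ht hsub
    unfold chainPred
    split_ifs with h0
    · exact prec_of_subset_of_free (empty_subset T) (free_empty_left T) hk
    · exact prec_of_subset_of_free (hsub _ (by omega)) (free_comm (hfree _ (by omega))) hk
  by_cases hall : ∀ t < M, W t ⊆ T
  · exact hch.2 ⟨T, hT, hprec M le_rfl hall⟩
  push Not at hall
  classical
  obtain ⟨ht₀, hnot⟩ := Nat.find_spec hall
  have hbefore : ∀ u < Nat.find hall, W u ⊆ T := fun u hu =>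
    by_contra fun h => Nat.find_min hall hu ⟨by omega, h⟩
  have hp := hprec _ ht₀.le hbefore
  have hmin := hch.1 _ ht₀
  rcases subset_or_subset_of_minimal_cond2 hmin hT hp.1.subset hp.2 with h | h
  · exact hnot h
  · exact hnot (hmin.le_of_le ⟨hT, hp⟩ h)

lemma subset_or_subset_of_minimal_cond3 (h2 : G.IsNested2 γ γ' M W)
    (hZ : Minimal (fun X => G.cond3 γ γ' (G.chainSet M W) X ∧ G.prec Y X) Z)
    (hT : G.cond3 γ γ' (G.chainSet M W) T) (hYT : Y ⊆ T) (hfree : G.free Y T) :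
    Z ⊆ T ∨ T ⊆ Z := by
  by_contra! h
  obtain ⟨⟨hZt, hγZ, hγ'Z, hbZ, hfZ⟩, hYZ⟩ := hZ.1
  obtain ⟨hTt, hγT, hγ'T, hbT, hfT⟩ := hT
  have hfreeX : ∀ X, G.Term X ⊆ G.Term Z ∪ G.Term T → ∀ V ∈ G.chainSet M W, G.free X V :=
    fun X hX V hV => free_left_of_Term_subset (hfZ V hV) (hfT V hV) hX
  have hnot2 : ∀ X, G.IsKTail X 2 → Z ∩ T ⊆ X → X ⊆ Z ∪ T →
      G.Term X ⊆ G.Term Z ∪ G.Term T → False := fun X hX hlo hhi hTX =>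
    not_forall_free_of_isNested2 h2
      ⟨hX, hlo (mem_inter.mpr ⟨hγZ, hγT⟩), hlo (mem_inter.mpr ⟨hγ'Z, hγ'T⟩),
        fun hb => by simpa [hbZ, hbT] using hhi hb⟩
      fun t ht => hfreeX X hTX _ ⟨t, ht, rfl⟩
  rcases uncross le_rfl hZt hTt (mem_inter.mpr ⟨hγZ, hγT⟩)
    (show G.base ∉ Z ∪ T by simp [hbZ, hbT]) h.1 h.2 with hA | ⟨-, hA | hU⟩
  · have hZA : Z ⊆ Z ∩ T := hZ.le_of_le
      ⟨⟨hA, mem_inter.mpr ⟨hγZ, hγT⟩, mem_inter.mpr ⟨hγ'Z, hγ'T⟩,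
        fun hb => hbZ (mem_inter.mp hb).1, hfreeX _ (Term_inter_subset Z T)⟩,
        prec_inter hYZ hYT hfree (by rw [hA.2]; norm_num)⟩ inter_subset_left
    exact h.1 (hZA.trans inter_subset_right)
  · exact hnot2 _ hA subset_rfl inter_subset_union (Term_inter_subset Z T)
  · exact hnot2 _ hU inter_subset_union subset_rfl (Term_union_subset Z T)

lemma minimal_cond3_subsingleton (h2 : G.IsNested2 γ γ' M W) (Y : Finset G.V) :
    {Z | Minimal (fun X => G.cond3 γ γ' (G.chainSet M W) X ∧ G.prec Y X) Z}.Subsingleton :=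
  setOf_minimal_subsingleton fun _ _ hZ hZ' =>
    subset_or_subset_of_minimal_cond3 h2 hZ hZ'.1.1 hZ'.1.2.1.subset hZ'.1.2.2

end NestedSets

section Transfer

variable {Z₀ : Finset G.V} {e : G.N} {a b c : G.V}

lemma crosses_of_Term_eq_singleton (hZ₀ : G.Term Z₀ = {e}) {S : Finset G.V} (hS : G.ConnSub S)
    {u v : G.V} (hu : u ∈ S) (hv : v ∈ S) (huZ : u ∈ Z₀) (hvZ : v ∉ Z₀) : G.crosses S e := by
  obtain ⟨e', he', hcross⟩ := hS.exists_mem_Term_crosses hu hv huZ hvZ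
  rw [hZ₀, mem_singleton] at he'
  exact he' ▸ hcross

lemma mem_of_crosses_of_onComp {S : Finset G.V} (h : G.crosses S e) (hb : G.onComp e b) :
    b ∈ S := by
  rcases hb with rfl | rfl
  exacts [h.1, h.2]

/-- Whether or not `a ∈ T`, one of the connected sets `T ∋ a, c` and `Tᶜ ∋ a, δ` meets both
`Z₀` and `Z₀ᶜ`, hence contains both branches of the only terminal point `e` of `Z₀`. -/
lemma mem_iff_mem_of_Term_eq_singleton {δ : G.V} (hZ₀ : G.Term Z₀ = {e}) (hb : G.onComp e b)
    (haZ : a ∈ Z₀) (hcZ : c ∉ Z₀) (hδZ : δ ∉ Z₀) {T : Finset G.V} (hT : G.IsTail T)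
    (hcT : c ∈ T) (hδT : δ ∉ T) : a ∈ T ↔ b ∈ T := by
  by_cases haT : a ∈ T
  · exact iff_of_true haT
      (mem_of_crosses_of_onComp (crosses_of_Term_eq_singleton hZ₀ hT.2.1 haT hcT haZ hcZ) hb)
  · refine iff_of_false haT (mem_compl.mp (mem_of_crosses_of_onComp ?_ hb))
    exact crosses_of_Term_eq_singleton hZ₀ hT.2.2 (mem_compl.mpr haT) (mem_compl.mpr hδT) haZ hδZ

lemma cond2_eq_of_forall_iff
    (hab : ∀ T, G.IsTail T → c ∈ T → G.base ∉ T → (a ∈ T ↔ b ∈ T)) :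
    G.cond2 a c = G.cond2 b c := by
  ext T
  exact ⟨fun ⟨hT, haT, hcT, hbT⟩ => ⟨hT, (hab T hT.1 hcT hbT).1 haT, hcT, hbT⟩,
    fun ⟨hT, hbT', hcT, hbT⟩ => ⟨hT, (hab T hT.1 hcT hbT).2 hbT', hcT, hbT⟩⟩

lemma cond3_eq_of_forall_iff
    (hab : ∀ T, G.IsTail T → c ∈ T → G.base ∉ T → (a ∈ T ↔ b ∈ T)) (T2 : Set (Finset G.V)) :
    G.cond3 a c T2 = G.cond3 b c T2 := by
  ext T
  exact ⟨fun ⟨hT, haT, hcT, hbT, hf⟩ => ⟨hT, (hab T hT.1 hcT hbT).1 haT, hcT, hbT, hf⟩,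
    fun ⟨hT, hbT', hcT, hbT, hf⟩ => ⟨hT, (hab T hT.1 hcT hbT).2 hbT', hcT, hbT, hf⟩⟩

lemma chainSets_eq_of_mem_T1_sdiff (ha : G.onComp e a) (hb : G.onComp e b)
    (hin : Z₀ ∈ G.T1 a ∪ G.T1 c) (hout : Z₀ ∉ G.T1 b ∪ G.T1 c)
    {M2a M2b M3a M3b : ℕ} {W2a W2b W3a W3b : ℕ → Finset G.V}
    (h2a : G.IsNested2 a c M2a W2a) (h2b : G.IsNested2 b c M2b W2b)
    (h3a : G.IsNested3 a c (G.chainSet M2a W2a) M3a W3a)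
    (h3b : G.IsNested3 b c (G.chainSet M2b W2b) M3b W3b) :
    G.chainSet M2a W2a = G.chainSet M2b W2b ∧ G.chainSet M3a W3a = G.chainSet M3b W3b := by
  obtain ⟨hZ₀, haZ, hbase⟩ : Z₀ ∈ G.T1 a := hin.resolve_right fun h => hout (.inr h)
  have hbZ : b ∉ Z₀ := fun h => hout (.inl ⟨hZ₀, h, hbase⟩)
  have hcZ : c ∉ Z₀ := fun h => hout (.inr ⟨hZ₀, h, hbase⟩)
  have he : e ∈ G.Term Z₀ := mem_Term_of_onComp ha hb haZ hbZ
  have hTerm : G.Term Z₀ = {e} :=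
    eq_singleton_iff_unique_mem.mpr ⟨he, fun x hx => card_le_one.mp hZ₀.2.le x hx e he⟩
  have hab := fun T (hT : G.IsTail T) =>
    mem_iff_mem_of_Term_eq_singleton hTerm hb haZ hcZ hbase hT
  rw [isNested2_iff] at h2a h2b
  rw [isNested3_iff] at h3a h3b
  rw [← cond2_eq_of_forall_iff hab] at h2b
  have hch2 := h2a.chainSet_eq h2b (minimal_cond2_subsingleton a c)
  rw [← hch2, ← cond3_eq_of_forall_iff hab] at h3b
  exact ⟨hch2, h3a.chainSet_eq h3b (minimal_cond3_subsingleton (isNested2_iff.mpr h2a))⟩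

end Transfer

end NodalGraph

theorem T1_symmDiff_empty_of_higher_symmDiff_nonempty_general
    (G : NodalGraph) (i j k : G.V)
    (hmeet : ∃ e, G.onComp e i ∧ G.onComp e j)
    (M2i M2j M3i M3j : ℕ) (W2i W2j W3i W3j : ℕ → Finset G.V)
    (h2i : G.IsNested2 i k M2i W2i) (h2j : G.IsNested2 j k M2j W2j)
    (h3i : G.IsNested3 i k (G.chainSet M2i W2i) M3i W3i)
    (h3j : G.IsNested3 j k (G.chainSet M2j W2j) M3j W3j)
    (hne : (symmDiff (G.chainSet M2i W2i) (G.chainSet M2j W2j)).Nonempty ∨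
           (symmDiff (G.chainSet M3i W3i) (G.chainSet M3j W3j)).Nonempty) :
    symmDiff (G.T1 i ∪ G.T1 k) (G.T1 j ∪ G.T1 k) = ∅ := by
  obtain ⟨e, hei, hej⟩ := hmeet
  by_contra hT1
  obtain ⟨Z₀, hZ₀⟩ := Set.nonempty_iff_ne_empty.mpr hT1
  obtain ⟨h2, h3⟩ : G.chainSet M2i W2i = G.chainSet M2j W2j ∧
      G.chainSet M3i W3i = G.chainSet M3j W3j := by
    rcases Set.mem_symmDiff.mp hZ₀ with ⟨hin, hout⟩ | ⟨hin, hout⟩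
    · exact NodalGraph.chainSets_eq_of_mem_T1_sdiff hei hej hin hout h2i h2j h3i h3j
    · obtain ⟨h2, h3⟩ := NodalGraph.chainSets_eq_of_mem_T1_sdiff hej hei hin hout h2j h2i h3j h3i
      exact ⟨h2.symm, h3.symm⟩
  rw [h2, h3, symmDiff_self, symmDiff_self] at hne
  simp at hne

/-- last sentence of Proposition 3.1: if `T^s_{i,k|j,k}` is
nonempty for some `s ∈ {2,3}`, then the symmetric difference of the degree-1
nested sets appearing in `T_{i,k}` and `T_{j,k}` is empty. -/
theorem T1_symmDiff_empty_of_higher_symmDiff_nonempty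
    (G : NodalGraph) (hconn : G.Connected) (i j k : G.V)
    (hij : i ≠ j) (hmeet : ∃ e, G.onComp e i ∧ G.onComp e j)
    (M2i M2j M3i M3j : ℕ) (W2i W2j W3i W3j : ℕ → Finset G.V)
    (h2i : G.IsNested2 i k M2i W2i) (h2j : G.IsNested2 j k M2j W2j)
    (h3i : G.IsNested3 i k (G.chainSet M2i W2i) M3i W3i)
    (h3j : G.IsNested3 j k (G.chainSet M2j W2j) M3j W3j)
    (hne : (symmDiff (G.chainSet M2i W2i) (G.chainSet M2j W2j)).Nonempty ∨
           (symmDiff (G.chainSet M3i W3i) (G.chainSet M3j W3j)).Nonempty) :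
    symmDiff (G.T1 i ∪ G.T1 k) (G.T1 j ∪ G.T1 k) = ∅ :=
  T1_symmDiff_empty_of_higher_symmDiff_nonempty_general G i j k hmeet M2i M2j M3i M3j W2i W2j W3i
    W3j h2i h2j h3i h3j hne
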